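/- For a multilinear function f : ℝ^T → ℝ, the nested first-order derivative computation (∂/∂λ₁)(⋯((∂f/∂λ_T)·λ_T)⋯)·λ₁ equals the T-th order mixed partial derivative ∂^T f/(∂λ₁⋯∂λ_T) evaluated anywhere, multiplied by λ₁·λ₂·⋯·λ_T. -/

import Mathlib

/-!
Linearity in each coordinate makes `f` a multilinear map on `ℝ^T`, so `f λ = f 1 · λ₁⋯λ_T`.
A Gradient×Input step `G ↦ ∂_t G · λ_t` returns any `G` that is linear in `λ_t` unchanged
(Euler's identity), so the nested computation is just `f`; each `∂_t` strips the factor `λ_t`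
off a monomial, so the mixed partial is the constant `f 1`.
-/

/-- Partial derivative of `F : ℝ^T → ℝ` in coordinate `t`. -/
noncomputable def pd {T : ℕ} (t : Fin T) (F : (Fin T → ℝ) → ℝ) : (Fin T → ℝ) → ℝ :=
  fun lam => deriv (fun u => F (Function.update lam t u)) (lam t)

/-- Mixed partial derivative `∂^T F / (∂λ₁ ⋯ ∂λ_T)`. -/
noncomputable def mixedPartial {T : ℕ} (F : (Fin T → ℝ) → ℝ) : (Fin T → ℝ) → ℝ :=
  (List.finRange T).foldr pd F

/-- Nested Gradient×Input computation. -/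
noncomputable def nestedGI {T : ℕ} (F : (Fin T → ℝ) → ℝ) : (Fin T → ℝ) → ℝ :=
  (List.finRange T).foldr (fun t G => fun lam => pd t G lam * lam t) F

theorem eq_mul_prod_of_isLinearMap_update {R ι : Type*} [CommSemiring R] [Fintype ι]
    [DecidableEq ι] {f : (ι → R) → R}
    (hf : ∀ (i : ι) (m : ι → R), IsLinearMap R (fun u : R => f (Function.update m i u)))
    (m : ι → R) : f m = f 1 * ∏ i, m i := by
  -- `convert` reconciles the arbitrary `DecidableEq ι` instance the fields quantify over
  let g : MultilinearMap R (fun _ : ι => R) R :=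
    { toFun := f
      map_update_add' := fun m i x y => by convert (hf i m).map_add x y
      map_update_smul' := fun m i c x => by convert (hf i m).map_smul c x }
  have hg := g.map_smul_univ m 1
  simp only [Pi.one_apply, smul_eq_mul, mul_one] at hg
  rw [mul_comm]
  exact hg

theorem IsLinearMap.apply_eq_apply_one_mul {R : Type*} [CommSemiring R] {φ : R → R}
    (hφ : IsLinearMap R φ) (u : R) : φ u = φ 1 * u := by
  simpa [mul_comm] using hφ.map_smul u 1

theorem pd_eq_of_update_eq_mul {T : ℕ} {t : Fin T} {F : (Fin T → ℝ) → ℝ} {lam : Fin T → ℝ}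
    {a : ℝ} (h : ∀ u, F (Function.update lam t u) = a * u) : pd t F lam = a := by
  simp [pd, h]

theorem pd_mul_self_of_isLinearMap {T : ℕ} {t : Fin T} {F : (Fin T → ℝ) → ℝ} {lam : Fin T → ℝ}
    (hF : IsLinearMap ℝ (fun u : ℝ => F (Function.update lam t u))) :
    pd t F lam * lam t = F lam := by
  rw [pd_eq_of_update_eq_mul hF.apply_eq_apply_one_mul, ← hF.apply_eq_apply_one_mul,
    Function.update_eq_self]

theorem nestedGI_eq_self {T : ℕ} {f : (Fin T → ℝ) → ℝ}
    (hf : ∀ (t : Fin T) (lam : Fin T → ℝ),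
      IsLinearMap ℝ (fun u : ℝ => f (Function.update lam t u))) :
    nestedGI f = f := by
  unfold nestedGI
  induction List.finRange T with
  | nil => rfl
  | cons t L ih => funext lam; rw [List.foldr_cons, ih, pd_mul_self_of_isLinearMap (hf t lam)]

theorem pd_const_mul_prod {T : ℕ} (c : ℝ) {S : Finset (Fin T)} {t : Fin T} (ht : t ∉ S) :
    pd t (fun lam => c * ∏ s ∈ insert t S, lam s) = fun lam => c * ∏ s ∈ S, lam s := by
  funext lam
  refine pd_eq_of_update_eq_mul fun u => ?_
  rw [Finset.prod_insert ht, Function.update_self,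
    Finset.prod_congr rfl fun s hs => Function.update_of_ne (ne_of_mem_of_not_mem hs ht) u lam]
  ring

theorem foldr_pd_const_mul_prod {T : ℕ} (c : ℝ) {L : List (Fin T)} (hL : L.Nodup) :
    L.foldr pd (fun lam => c * ∏ s ∈ L.toFinset, lam s) = fun _ => c := by
  induction L using List.reverseRecOn with
  | nil => simp
  | append_singleton L t ih =>
    obtain ⟨hL, -, ht⟩ := List.nodup_append.mp hL
    have ht : t ∉ L.toFinset := fun h =>
      ht t (List.mem_toFinset.mp h) t (List.mem_singleton_self t) rfl
    have hinsert : (L ++ [t]).toFinset = insert t L.toFinset := by ext; simp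
    rw [List.foldr_append, List.foldr_cons, List.foldr_nil, hinsert, pd_const_mul_prod c ht, ih hL]

/-- For a multilinear `f`, the nested first-order derivative computation equals the
`T`-th order mixed partial (evaluated anywhere) times `λ₁⋯λ_T`. -/
theorem nestedGI_eq_mixedPartial {T : ℕ} (f : (Fin T → ℝ) → ℝ)
    (hf : ∀ (t : Fin T) (lam : Fin T → ℝ),
      IsLinearMap ℝ (fun u : ℝ => f (Function.update lam t u))) :
    ∀ lam mu : Fin T → ℝ, nestedGI f lam = mixedPartial f mu * ∏ t, lam t := by
  intro lam mu
  have hprod : f = fun lam => f 1 * ∏ t ∈ (List.finRange T).toFinset, lam t := by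
    rw [List.toFinset_finRange]
    exact funext (eq_mul_prod_of_isLinearMap_update hf)
  have hmixed : mixedPartial f mu = f 1 := by
    conv_lhs => rw [mixedPartial, hprod, foldr_pd_const_mul_prod _ (List.nodup_finRange T)]
  rw [nestedGI_eq_self hf, hmixed, eq_mul_prod_of_isLinearMap_update hf lam]
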